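/- Let a ∈ ℝ and let h : (a,∞) → ℝ be a strictly increasing C¹ function with lim_{x→a⁺} h(x) = 0. Define σ : ℝ → ℝ by σ(x) = 0 for x ≤ a and σ(x) = h(x) for x > a (so σ is continuous; the ReLU function is the case a = 0, h(x) = x). Let ℓ : ℝⁿ → ℝ be a nonzero linear functional and f = σ ∘ ℓ. If γ : [0,1] → ℝⁿ is a C¹ curve such that for every s with ℓ(γ(s)) ≠ a one has σ'(ℓ(γ(s)))·ℓ(γ'(s)) = 0 (i.e., γ is a null curve of the pullback pseudo-metric f*g wherever it is defined), then f ∘ γ is constant on [0,1]. In particular two points belonging to different equivalence classes of f cannot both belong to the image of a null curve. The analogous statement holds when h is strictly decreasing. -/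

import Mathlib

open Set Filter

/-- Let `σ` be a ReLU-like activation: `σ(x) = 0` for `x ≤ a` and `σ(x) = h(x)` for `x > a`,
where `h` is strictly increasing, `C¹` on `(a,∞)`, and `h(x) → 0` as `x → a⁺` (ReLU is
`a = 0`, `h = id`). Let `ℓ` be a nonzero linear functional and `f = σ ∘ ℓ`. If
`γ : [0,1] → ℝⁿ` is a `C¹` curve such that `σ'(ℓ(γ(s))) · ℓ(γ'(s)) = 0` at every `s` with
`ℓ(γ(s)) ≠ a` (i.e. `γ` is a null curve of the pullback pseudo-metric wherever it is
defined), then `f ∘ γ` is constant on `[0,1]`; in particular two points in different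
equivalence classes of `f` cannot both lie on the image of a null curve. -/
theorem stmt_8 {n : ℕ} (a : ℝ) (h : ℝ → ℝ)
    (hmono : StrictMonoOn h (Set.Ioi a))
    (hC1 : ContDiffOn ℝ 1 h (Set.Ioi a))
    (hlim : Tendsto h (nhdsWithin a (Set.Ioi a)) (nhds 0))
    (σ : ℝ → ℝ) (hσ : ∀ x, σ x = if x ≤ a then 0 else h x)
    (ℓ : EuclideanSpace ℝ (Fin n) →ₗ[ℝ] ℝ) (hℓ : ℓ ≠ 0)
    (γ : ℝ → EuclideanSpace ℝ (Fin n)) (hγ : ContDiffOn ℝ 1 γ (Set.Icc 0 1))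
    (hnull : ∀ s ∈ Set.Icc (0 : ℝ) 1, ℓ (γ s) ≠ a →
      deriv σ (ℓ (γ s)) * ℓ (derivWithin γ (Set.Icc 0 1) s) = 0) :
    ∀ s ∈ Set.Icc (0 : ℝ) 1, σ (ℓ (γ s)) = σ (ℓ (γ 0)) := by
  set φ : ℝ → ℝ := fun s => ℓ (γ s) with hφdef
  set G : ℝ → ℝ := fun s => σ (ℓ (γ s)) with hGdef
  have φcont : ContinuousOn φ (Set.Icc 0 1) :=
    ℓ.toContinuousLinearMap.continuous.comp_continuousOn hγ.continuousOn
  -- positivity of h on (a, ∞)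
  have hpos : ∀ x, a < x → 0 < h x := by
    intro x hx
    have hay : a < (a + x) / 2 := by linarith
    have hyx : (a + x) / 2 < x := by linarith
    have h0y : 0 ≤ h ((a + x) / 2) := by
      refine le_of_tendsto hlim ?_
      filter_upwards [Ioo_mem_nhdsGT_of_mem (show a ∈ Set.Ico a ((a + x) / 2) from ⟨le_rfl, hay⟩)]
        with z hz
      exact (hmono hz.1 hay hz.2).le
    have := hmono hay hx hyx
    linarith
  -- continuity of σ
  have σcont : Continuous σ := by
    rw [continuous_iff_continuousAt]
    intro x
    rcases lt_trichotomy x a with hxa | rfl | hax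
    · have hev : (fun _ : ℝ => (0 : ℝ)) =ᶠ[nhds x] σ := by
        filter_upwards [Iio_mem_nhds hxa] with y hy
        rw [hσ, if_pos (le_of_lt (Set.mem_Iio.mp hy))]
      exact continuousAt_const.congr hev
    · have hσx : σ x = 0 := by rw [hσ]; simp
      unfold ContinuousAt
      rw [hσx, ← nhdsLE_sup_nhdsGT x]
      rw [Filter.tendsto_sup]
      constructor
      · refine tendsto_const_nhds.congr' ?_
        filter_upwards [self_mem_nhdsWithin] with y hy
        rw [hσ, if_pos (Set.mem_Iic.mp hy)]
      · refine hlim.congr' ?_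
        filter_upwards [self_mem_nhdsWithin] with y hy
        rw [hσ]; simp [not_le.2 (Set.mem_Ioi.mp hy)]
    · have hev : h =ᶠ[nhds x] σ := by
        filter_upwards [Ioi_mem_nhds hax] with y hy
        rw [hσ]; simp [not_le.2 (Set.mem_Ioi.mp hy)]
      exact ((hC1.continuousOn.continuousAt (Ioi_mem_nhds hax))).congr hev
  have Gcont : ContinuousOn G (Set.Icc 0 1) := σcont.comp_continuousOn φcont
  -- key derivative lemma
  have hderivkey : ∀ x ∈ Set.Ico (0 : ℝ) 1, a < φ x → HasDerivWithinAt G 0 (Set.Ici x) x := by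
    intro x hx hax
    have hγd : HasDerivWithinAt γ (derivWithin γ (Set.Icc 0 1) x) (Set.Icc 0 1) x :=
      ((hγ.differentiableOn one_ne_zero) x ⟨hx.1, hx.2.le⟩).hasDerivWithinAt
    have hmem : Set.Icc (0 : ℝ) 1 ∈ nhdsWithin x (Set.Ici x) := by
      have h1 : Set.Icc x 1 ∈ nhdsWithin x (Set.Ici x) := by
        rw [← Set.Ici_inter_Iic]
        exact Filter.inter_mem self_mem_nhdsWithin
          (mem_nhdsWithin_of_mem_nhds (Iic_mem_nhds hx.2))
      exact Filter.mem_of_superset h1 (Set.Icc_subset_Icc hx.1 le_rfl)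
    have hγd' : HasDerivWithinAt γ (derivWithin γ (Set.Icc 0 1) x) (Set.Ici x) x :=
      hγd.mono_of_mem_nhdsWithin hmem
    have hφd : HasDerivWithinAt φ (ℓ (derivWithin γ (Set.Icc 0 1) x)) (Set.Ici x) x :=
      ℓ.toContinuousLinearMap.hasFDerivAt.comp_hasDerivWithinAt x hγd'
    have hhdiff : DifferentiableAt ℝ h (φ x) :=
      (hC1.differentiableOn one_ne_zero).differentiableAt (Ioi_mem_nhds hax)
    have hσh : σ =ᶠ[nhds (φ x)] h := by
      filter_upwards [Ioi_mem_nhds hax] with y hy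
      rw [hσ]; simp [not_le.2 (Set.mem_Ioi.mp hy)]
    have hσd : HasDerivAt σ (deriv h (φ x)) (φ x) :=
      hhdiff.hasDerivAt.congr_of_eventuallyEq hσh
    have hcomp := hσd.comp_hasDerivWithinAt x hφd
    have hderiveq : deriv σ (φ x) = deriv h (φ x) := hσh.deriv_eq
    have hzero : deriv h (φ x) * ℓ (derivWithin γ (Set.Icc 0 1) x) = 0 := by
      rw [← hderiveq]
      exact hnull x ⟨hx.1, hx.2.le⟩ (ne_of_gt hax)
    rw [hzero] at hcomp
    exact hcomp
  by_cases hall : ∀ t ∈ Set.Icc (0 : ℝ) 1, φ t ≤ a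
  · intro s hs
    rw [hσ, hσ]
    simp [show ℓ (γ s) ≤ a from hall s hs, show ℓ (γ 0) ≤ a from hall 0 ⟨le_rfl, zero_le_one⟩]
  · push_neg at hall
    obtain ⟨v, hv, hva⟩ := hall
    by_cases hall2 : ∀ t ∈ Set.Icc (0 : ℝ) 1, a < φ t
    · intro s hs
      exact constant_of_has_deriv_right_zero Gcont
        (fun x hx => hderivkey x hx (hall2 x ⟨hx.1, hx.2.le⟩)) s hs
    · push_neg at hall2
      obtain ⟨w, hw, hwa⟩ := hall2
      exfalso
      have hGv : 0 < G v := by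
        show 0 < σ (ℓ (γ v)); rw [hσ]
        simp only [not_le.2 (show a < ℓ (γ v) from hva), if_false]
        exact hpos _ hva
      rcases lt_trichotomy v w with hvw | rfl | hwv
      · -- v < w : let T = inf of points in [v,w] with φ ≤ a
        set K : Set ℝ := Set.Icc v w ∩ φ ⁻¹' Set.Iic a with hKdef
        have hKclosed : IsClosed K :=
          ContinuousOn.preimage_isClosed_of_isClosed (φcont.mono (Set.Icc_subset_Icc hv.1 hw.2))
            isClosed_Icc isClosed_Iic
        have hKne : K.Nonempty := ⟨w, ⟨hvw.le, le_rfl⟩, hwa⟩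
        have hKbdd : BddBelow K := ⟨v, fun u hu => hu.1.1⟩
        set T := sInf K with hTdef
        have hTK : T ∈ K := hKclosed.csInf_mem hKne hKbdd
        have hvT : v < T :=
          (le_csInf hKne fun u hu => hu.1.1).lt_of_ne
            (fun h' => (not_le.2 hva) (by rw [h']; exact hTK.2))
        have hTle : T ≤ w := hTK.1.2
        have hconst := constant_of_has_deriv_right_zero
          (Gcont.mono (Set.Icc_subset_Icc hv.1 (hTle.trans hw.2)))
          (fun x hx => by
            refine hderivkey x ⟨hv.1.trans hx.1, lt_of_lt_of_le (hx.2.trans_le hTle) hw.2⟩ ?_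
            by_contra hnot
            push_neg at hnot
            exact absurd (csInf_le hKbdd ⟨⟨hx.1, (hx.2.le.trans hTle)⟩, hnot⟩) (not_le.2 hx.2))
        have hGT := hconst T ⟨hvT.le, le_rfl⟩
        have hGT0 : G T = 0 := by
          show σ (ℓ (γ T)) = 0; rw [hσ, if_pos (Set.mem_Iic.mp hTK.2)]
        rw [hGT0] at hGT
        linarith [hGT.symm ▸ hGv]
      · exact absurd hwa (not_le.2 hva)
      · -- w < v : let T = sup of points in [w,v] with φ ≤ a
        set K : Set ℝ := Set.Icc w v ∩ φ ⁻¹' Set.Iic a with hKdef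
        have hKclosed : IsClosed K :=
          ContinuousOn.preimage_isClosed_of_isClosed (φcont.mono (Set.Icc_subset_Icc hw.1 hv.2))
            isClosed_Icc isClosed_Iic
        have hKne : K.Nonempty := ⟨w, ⟨le_rfl, hwv.le⟩, hwa⟩
        have hKbdd : BddAbove K := ⟨v, fun u hu => hu.1.2⟩
        set T := sSup K with hTdef
        have hTK : T ∈ K := hKclosed.csSup_mem hKne hKbdd
        have hTv : T < v :=
          (csSup_le hKne fun u hu => hu.1.2).lt_of_ne
            (fun h' => (not_le.2 hva) (by rw [← h']; exact hTK.2))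
        have hwT : w ≤ T := hTK.1.1
        -- φ > a on (T, v]
        have hgt : ∀ u ∈ Set.Ioc T v, a < φ u := by
          intro u hu
          by_contra hnot
          push_neg at hnot
          exact absurd (le_csSup hKbdd ⟨⟨hwT.trans hu.1.le, hu.2⟩, hnot⟩) (not_le.2 hu.1)
        -- G constant = G v on (T, v]
        have hconst : ∀ u ∈ Set.Ioc T v, G u = G v := by
          intro u hu
          have h0u : (0 : ℝ) ≤ u := hw.1.trans (hwT.trans hu.1.le)
          have hc := constant_of_has_deriv_right_zero
            (Gcont.mono (Set.Icc_subset_Icc h0u hv.2))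
            (fun x hx => hderivkey x ⟨h0u.trans hx.1, lt_of_lt_of_le hx.2 hv.2⟩
              (hgt x ⟨lt_of_lt_of_le hu.1 hx.1, hx.2.le⟩))
          exact (hc v ⟨hu.2, le_rfl⟩).symm
        have hT01 : T ∈ Set.Icc (0 : ℝ) 1 := ⟨hw.1.trans hwT, hTv.le.trans hv.2⟩
        have hIocmem : Set.Ioc T v ⊆ Set.Icc (0 : ℝ) 1 := fun u hu =>
          ⟨hw.1.trans (hwT.trans hu.1.le), hu.2.trans hv.2⟩
        have hne : (nhdsWithin T (Set.Ioc T v)).NeBot := by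
          rw [← mem_closure_iff_nhdsWithin_neBot, closure_Ioc hTv.ne]
          exact ⟨le_rfl, hTv.le⟩
        have htend : Tendsto G (nhdsWithin T (Set.Ioc T v)) (nhds (G T)) :=
          (Gcont T hT01).mono hIocmem
        have htend2 : Tendsto G (nhdsWithin T (Set.Ioc T v)) (nhds (G v)) := by
          refine tendsto_const_nhds.congr' ?_
          filter_upwards [self_mem_nhdsWithin] with u hu
          exact (hconst u hu).symm
        have hGT0 : G T = 0 := by
          show σ (ℓ (γ T)) = 0; rw [hσ, if_pos (Set.mem_Iic.mp hTK.2)]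
        have := tendsto_nhds_unique htend htend2
        rw [hGT0] at this
        linarith [this ▸ hGv]
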